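/- For any Boolean function f : {-1,1}^n → {-1,1}, (1/2) · Var(f) · log₂(1/Var(f)) ≤ I[f], where Var(f) = 1 - f̂(∅)² and I[f] is the total influence. -/

import Mathlib

open Finset Real

noncomputable def chi {n : ℕ} (S : Finset (Fin n)) (x : Fin n → Bool) : ℝ :=
  ∏ i ∈ S, (if x i then (1:ℝ) else -1)

noncomputable def coeff {n : ℕ} (f : (Fin n → Bool) → ℝ) (S : Finset (Fin n)) : ℝ :=
  (∑ x : Fin n → Bool, f x * chi S x) / 2 ^ n

noncomputable def spectralEntropy {n : ℕ} (f : (Fin n → Bool) → ℝ) : ℝ :=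
  ∑ S : Finset (Fin n), (coeff f S) ^ 2 * Real.logb 2 (1 / (coeff f S) ^ 2)

noncomputable def totalInfluence {n : ℕ} (f : (Fin n → Bool) → ℝ) : ℝ :=
  ∑ S : Finset (Fin n), (S.card : ℝ) * (coeff f S) ^ 2

noncomputable def minEntropy {n : ℕ} (f : (Fin n → Bool) → ℝ) : ℝ :=
  ⨅ S : Finset (Fin n), Real.logb 2 (1 / (coeff f S) ^ 2)

noncomputable def fVar {n : ℕ} (f : (Fin n → Bool) → ℝ) : ℝ := 1 - (coeff f ∅) ^ 2

def IsBoolean {n : ℕ} (f : (Fin n → Bool) → ℝ) : Prop := ∀ x, f x = 1 ∨ f x = -1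

noncomputable def binEnt (x : ℝ) : ℝ :=
  x * Real.logb 2 (1 / x) + (1 - x) * Real.logb 2 (1 / (1 - x))

noncomputable def l1Norm {n : ℕ} (f : (Fin n → Bool) → ℝ) : ℝ :=
  ∑ S : Finset (Fin n), |coeff f S|

noncomputable def tensor {n m : ℕ} (f : (Fin n → Bool) → ℝ) (g : (Fin m → Bool) → ℝ) :
    (Fin (n + m) → Bool) → ℝ :=
  fun x => f (fun i => x (Fin.castAdd m i)) * g (fun j => x (Fin.natAdd n j))

/-!
By Parseval, `I[f] = ∑ i, Pr[f x ≠ f (x with bit i flipped)]`. With `η x = -x log x`,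
induction on the first coordinate shows `2 η μ ≤ log 2 · I[f]` for `μ = Pr[f = -1] = (1 - 𝔼 f) / 2`:
if the two halves have densities `a`, `b`, then `μ = (a + b) / 2`, the first coordinate has
influence at least `|a - b|`, and `2 η ((a + b) / 2) ≤ η a + η b + |a - b| log 2`, which is the
concavity bound `H p ≥ 2 min(p, 1 - p) log 2` for binary entropy. Applied to the smaller of `μ`,
`1 - μ`, together with `Var f = 4μ(1 - μ)` and `η (4t(1 - t)) ≤ 4 η t` for `t ≤ 1/2`, this gives
the theorem.
-/

def flipBit {n : ℕ} (i : Fin n) (x : Fin n → Bool) : Fin n → Bool :=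
  Function.update x i (!x i)

lemma flipBit_involutive {n : ℕ} (i : Fin n) : Function.Involutive (flipBit i) := by
  intro x
  ext j
  by_cases h : j = i
  · subst h; simp [flipBit]
  · simp [flipBit, h]

lemma chi_flipBit {n : ℕ} (S : Finset (Fin n)) (i : Fin n) (x : Fin n → Bool) :
    chi S (flipBit i x) = (if i ∈ S then -1 else 1) * chi S x := by
  have hflip : ∀ j, (if flipBit i x j then (1:ℝ) else -1)
      = Function.update (fun k => if x k then (1:ℝ) else -1) i (-if x i then 1 else -1) j := by
    intro j
    rw [flipBit, Function.apply_update (fun _ (b : Bool) => if b then (1:ℝ) else -1)]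
    cases x i <;> simp
  simp only [chi, hflip]
  by_cases hi : i ∈ S
  · rw [if_pos hi, prod_update_of_mem hi, prod_eq_mul_prod_sdiff_singleton_of_mem hi]
    ring
  · rw [if_neg hi, prod_update_of_notMem hi, one_mul]

lemma coeff_comp_flipBit {n : ℕ} (f : (Fin n → Bool) → ℝ) (i : Fin n) (S : Finset (Fin n)) :
    coeff (fun x => f (flipBit i x)) S = (if i ∈ S then -1 else 1) * coeff f S := by
  have hsum : ∑ x, f (flipBit i x) * chi S x = ∑ x, f x * chi S (flipBit i x) := by
    rw [← Equiv.sum_comp (flipBit_involutive i).toPerm (fun x => f x * chi S (flipBit i x))]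
    simp [flipBit_involutive i _]
  simp only [coeff, hsum, chi_flipBit, mul_div_assoc', mul_sum]
  congr 1
  exact sum_congr rfl fun x _ => by ring

lemma coeff_sub_comp_flipBit {n : ℕ} (f : (Fin n → Bool) → ℝ) (i : Fin n)
    (S : Finset (Fin n)) :
    coeff (fun x => (f x - f (flipBit i x)) / 2) S = if i ∈ S then coeff f S else 0 := by
  have hlin : coeff (fun x => (f x - f (flipBit i x)) / 2) S
      = (coeff f S - coeff (fun x => f (flipBit i x)) S) / 2 := by
    simp only [coeff, ← sub_div, ← sum_sub_distrib, div_div, sum_div]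
    exact sum_congr rfl fun x _ => by ring
  rw [hlin, coeff_comp_flipBit]
  split_ifs <;> ring

lemma sum_chi_mul_chi {n : ℕ} (x y : Fin n → Bool) :
    ∑ S : Finset (Fin n), chi S x * chi S y = if x = y then (2:ℝ) ^ n else 0 := by
  set σ : Bool → ℝ := fun b => if b then 1 else -1
  have hprod : ∑ S : Finset (Fin n), chi S x * chi S y = ∏ i, (σ (x i) * σ (y i) + 1) := by
    simp only [chi, ← prod_mul_distrib, prod_add, prod_const_one, mul_one, powerset_univ]
    rfl
  rw [hprod]
  split_ifs with hxy
  · subst hxy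
    have h2 : ∀ i, σ (x i) * σ (x i) + 1 = 2 := fun i => by cases x i <;> norm_num [σ]
    simp [h2]
  · obtain ⟨i, hi⟩ : ∃ i, x i ≠ y i := Function.ne_iff.mp hxy
    refine prod_eq_zero (mem_univ i) ?_
    cases hx : x i <;> cases hy : y i <;> simp_all [σ]

lemma sum_coeff_mul_coeff {n : ℕ} (f g : (Fin n → Bool) → ℝ) :
    ∑ S, coeff f S * coeff g S = (∑ x, f x * g x) / 2 ^ n := by
  have hexpand : ∀ S, coeff f S * coeff g S
      = (∑ x, ∑ y, f x * g y * (chi S x * chi S y)) / (2 ^ n * 2 ^ n) := fun S => by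
    rw [coeff, coeff, div_mul_div_comm, sum_mul_sum]
    congr 1
    exact sum_congr rfl fun x _ => sum_congr rfl fun y _ => by ring
  simp only [hexpand, ← sum_div, sum_comm (s := (univ : Finset (Finset (Fin n)))),
    ← mul_sum, sum_chi_mul_chi, mul_ite, mul_zero, sum_ite_eq, mem_univ, if_true, ← sum_mul]
  field_simp

noncomputable def influence {n : ℕ} (i : Fin n) (f : (Fin n → Bool) → ℝ) : ℝ :=
  (∑ x, ((f x - f (flipBit i x)) / 2) ^ 2) / 2 ^ n

lemma totalInfluence_eq_sum_influence {n : ℕ} (f : (Fin n → Bool) → ℝ) :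
    totalInfluence f = ∑ i, influence i f := by
  have hcard : ∀ S : Finset (Fin n), (#S : ℝ) = ∑ i, if i ∈ S then 1 else 0 := fun S => by
    simp
  have hinf : ∀ i, influence i f = ∑ S, if i ∈ S then coeff f S ^ 2 else 0 := fun i => by
    simp only [influence, sq, ← sum_coeff_mul_coeff]
    refine sum_congr rfl fun S _ => ?_
    rw [coeff_sub_comp_flipBit]
    split_ifs <;> ring
  simp only [totalInfluence, hinf, hcard, sum_mul, ite_mul, one_mul, zero_mul]
  exact sum_comm

noncomputable def mean {n : ℕ} (f : (Fin n → Bool) → ℝ) : ℝ := (∑ x, f x) / 2 ^ n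

lemma coeff_empty {n : ℕ} (f : (Fin n → Bool) → ℝ) : coeff f ∅ = mean f := by
  simp [coeff, chi, mean]

def restrictFirst {n : ℕ} (b : Bool) (f : (Fin (n + 1) → Bool) → ℝ) :
    (Fin n → Bool) → ℝ :=
  fun y => f (Fin.cons b y)

lemma sum_eq_sum_restrictFirst {n : ℕ} (f : (Fin (n + 1) → Bool) → ℝ) :
    ∑ x, f x = ∑ y, restrictFirst false f y + ∑ y, restrictFirst true f y := by
  rw [← (Fin.consEquiv fun _ => Bool).sum_comp, Fintype.sum_prod_type, Fintype.sum_bool, add_comm]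
  rfl

lemma flipBit_zero_cons {n : ℕ} (b : Bool) (y : Fin n → Bool) :
    flipBit 0 (Fin.cons b y) = Fin.cons (!b) y := by
  rw [flipBit, Fin.cons_zero, Fin.update_cons_zero]

lemma flipBit_succ_cons {n : ℕ} (i : Fin n) (b : Bool) (y : Fin n → Bool) :
    flipBit i.succ (Fin.cons b y) = Fin.cons b (flipBit i y) := by
  rw [flipBit, Fin.cons_succ, flipBit, Fin.cons_update]

lemma mean_eq_restrictFirst {n : ℕ} (f : (Fin (n + 1) → Bool) → ℝ) :
    mean f = (mean (restrictFirst false f) + mean (restrictFirst true f)) / 2 := by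
  rw [mean, mean, mean, sum_eq_sum_restrictFirst, pow_succ]
  ring

lemma influence_zero_eq_restrictFirst {n : ℕ} (f : (Fin (n + 1) → Bool) → ℝ) :
    influence 0 f
      = (∑ y, ((restrictFirst false f y - restrictFirst true f y) / 2) ^ 2) / 2 ^ n := by
  rw [influence, sum_eq_sum_restrictFirst, pow_succ]
  simp only [restrictFirst, flipBit_zero_cons, Bool.not_false, Bool.not_true]
  have hsymm : ∀ a b : ℝ, ((a - b) / 2) ^ 2 + ((b - a) / 2) ^ 2 = 2 * ((a - b) / 2) ^ 2 :=
    fun a b => by ring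
  rw [← sum_add_distrib]
  simp only [hsymm, ← mul_sum]
  field_simp

lemma influence_succ_eq_restrictFirst {n : ℕ} (i : Fin n) (f : (Fin (n + 1) → Bool) → ℝ) :
    influence i.succ f
      = (influence i (restrictFirst false f) + influence i (restrictFirst true f)) / 2 := by
  rw [influence, influence, influence, sum_eq_sum_restrictFirst, pow_succ]
  simp only [restrictFirst, flipBit_succ_cons]
  ring

lemma sum_influence_eq_restrictFirst {n : ℕ} (f : (Fin (n + 1) → Bool) → ℝ) :
    ∑ i, influence i f = influence 0 f +
      (∑ i, influence i (restrictFirst false f) + ∑ i, influence i (restrictFirst true f)) / 2 := by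
  simp only [Fin.sum_univ_succ (f := fun i => influence i f), influence_succ_eq_restrictFirst,
    ← sum_div, sum_add_distrib]

lemma abs_mean_restrictFirst_sub_le {n : ℕ} {f : (Fin (n + 1) → Bool) → ℝ}
    (hf : IsBoolean f) :
    |mean (restrictFirst false f) - mean (restrictFirst true f)| ≤ 2 * influence 0 f := by
  have hpt : ∀ y, |restrictFirst false f y - restrictFirst true f y|
      = 2 * ((restrictFirst false f y - restrictFirst true f y) / 2) ^ 2 := fun y => by
    rcases hf (Fin.cons false y) with h0 | h0 <;> rcases hf (Fin.cons true y) with h1 | h1 <;>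
      simp only [restrictFirst, h0, h1] <;> norm_num
  rw [influence_zero_eq_restrictFirst, mean, mean, ← sub_div, ← sum_sub_distrib, abs_div,
    abs_of_pos (by positivity : (0 : ℝ) < 2 ^ n), mul_div_assoc', mul_sum]
  gcongr
  exact (abs_sum_le_sum_abs _ _).trans_eq (sum_congr rfl fun y _ => hpt y)

lemma one_sub_abs_mul_log_two_le_binEntropy {p : ℝ} (hp₀ : 0 ≤ p) (hp₁ : p ≤ 1) :
    (1 - |2 * p - 1|) * log 2 ≤ binEntropy p := by
  wlog hp : p ≤ 1 / 2 generalizing p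
  · have h := this (p := 1 - p) (by linarith) (by linarith) (by linarith)
    rwa [binEntropy_one_sub, show 2 * (1 - p) - 1 = -(2 * p - 1) by ring, abs_neg] at h
  have hconc := strictConcave_binEntropy.concaveOn.2 (show (0 : ℝ) ∈ Set.Icc 0 1 by norm_num)
    (show (2⁻¹ : ℝ) ∈ Set.Icc 0 1 by norm_num) (show 0 ≤ 1 - 2 * p by linarith)
    (show 0 ≤ 2 * p by linarith) (by ring)
  simp only [smul_eq_mul, binEntropy_zero, binEntropy_two_inv] at hconc
  rw [show (1 - 2 * p) * 0 + 2 * p * 2⁻¹ = p by ring] at hconc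
  rw [abs_of_nonpos (by linarith)]
  linarith

lemma two_mul_negMulLog_midpoint_le {a b : ℝ} (ha : 0 ≤ a) (hb : 0 ≤ b) :
    2 * negMulLog ((a + b) / 2) ≤ negMulLog a + negMulLog b + |a - b| * log 2 := by
  rcases (add_nonneg ha hb).eq_or_lt with hs | hs
  · obtain rfl : a = 0 := by linarith
    obtain rfl : b = 0 := by linarith
    simp
  obtain ⟨s, p, rfl, rfl, hs, hp₀, hp₁⟩ :
      ∃ s p : ℝ, a = s * p ∧ b = s * (1 - p) ∧ 0 < s ∧ 0 ≤ p ∧ p ≤ 1 :=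
    ⟨a + b, a / (a + b), by field_simp, by field_simp; ring, hs, by positivity,
      (div_le_one hs).2 (by linarith)⟩
  have hH := one_sub_abs_mul_log_two_le_binEntropy hp₀ hp₁
  rw [binEntropy_eq_negMulLog_add_negMulLog_one_sub] at hH
  have hhalf : negMulLog 2⁻¹ = 2⁻¹ * log 2 := by rw [negMulLog, log_inv]; ring
  rw [show (s * p + s * (1 - p)) / 2 = s * 2⁻¹ by ring,
    show s * p - s * (1 - p) = s * (2 * p - 1) by ring, abs_mul, abs_of_pos hs,
    negMulLog_mul, negMulLog_mul, negMulLog_mul, hhalf]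
  nlinarith [mul_le_mul_of_nonneg_left hH hs.le]

lemma negMulLog_four_mul_mul_one_sub_le {t : ℝ} (ht₀ : 0 ≤ t) (ht : t ≤ 1 / 2) :
    negMulLog (4 * t * (1 - t)) ≤ 4 * negMulLog t := by
  rcases ht₀.eq_or_lt with rfl | ht₀
  · simp
  set v := 4 * t * (1 - t)
  have hv₀ : t ≤ v := by nlinarith
  have hv₁ : v ≤ 1 := by nlinarith [sq_nonneg (2 * t - 1)]
  have hlog_le : 0 ≤ -log v := neg_nonneg.2 (log_nonpos (by linarith) hv₁)
  calc negMulLog v = v * -log v := by rw [negMulLog]; ring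
    _ ≤ 4 * t * -log v := mul_le_mul_of_nonneg_right (by nlinarith) hlog_le
    _ ≤ 4 * t * -log t := by gcongr
    _ = 4 * negMulLog t := by rw [negMulLog]; ring

lemma IsBoolean.neg {n : ℕ} {f : (Fin n → Bool) → ℝ} (hf : IsBoolean f) :
    IsBoolean (fun x => -f x) := fun x => by
  rcases hf x with h | h <;> simp [h]

lemma IsBoolean.abs_mean_le_one {n : ℕ} {f : (Fin n → Bool) → ℝ} (hf : IsBoolean f) :
    |mean f| ≤ 1 := by
  have habs : ∀ x, |f x| = 1 := fun x => by rcases hf x with h | h <;> simp [h]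
  rw [mean, abs_div, abs_of_pos (by positivity : (0 : ℝ) < 2 ^ n), div_le_one (by positivity)]
  calc |∑ x, f x| ≤ ∑ x, |f x| := abs_sum_le_sum_abs _ _
    _ = 2 ^ n := by simp [habs]

lemma mean_neg {n : ℕ} (f : (Fin n → Bool) → ℝ) : mean (fun x => -f x) = -mean f := by
  rw [mean, mean, sum_neg_distrib, neg_div]

lemma influence_neg {n : ℕ} (i : Fin n) (f : (Fin n → Bool) → ℝ) :
    influence i (fun x => -f x) = influence i f := by
  simp only [influence]
  congr 1
  exact sum_congr rfl fun x _ => by ring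

lemma two_mul_negMulLog_le_log_two_mul_sum_influence {n : ℕ} {f : (Fin n → Bool) → ℝ}
    (hf : IsBoolean f) : 2 * negMulLog ((1 - mean f) / 2) ≤ log 2 * ∑ i, influence i f := by
  induction n with
  | zero =>
    obtain ⟨x₀, hmean⟩ : ∃ x₀, mean f = f x₀ :=
      ⟨_, by rw [mean, Fintype.sum_unique, pow_zero, div_one]⟩
    rcases hf x₀ with h | h <;> norm_num [hmean, h]
  | succ n ih =>
    set g₀ := restrictFirst false f
    set g₁ := restrictFirst true f
    have h₀ := ih (f := g₀) fun y => hf _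
    have h₁ := ih (f := g₁) fun y => hf _
    have hm₀ := (abs_le.mp (IsBoolean.abs_mean_le_one (f := g₀) fun y => hf _)).2
    have hm₁ := (abs_le.mp (IsBoolean.abs_mean_le_one (f := g₁) fun y => hf _)).2
    have hmid := two_mul_negMulLog_midpoint_le (a := (1 - mean g₀) / 2)
      (b := (1 - mean g₁) / 2) (by linarith) (by linarith)
    have hcross : |(1 - mean g₀) / 2 - (1 - mean g₁) / 2| * log 2 ≤ influence 0 f * log 2 := by
      refine mul_le_mul_of_nonneg_right ?_ (log_nonneg one_le_two)
      rw [show (1 - mean g₀) / 2 - (1 - mean g₁) / 2 = -((mean g₀ - mean g₁) / 2) by ring,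
        abs_neg, abs_div, abs_two]
      linarith [abs_mean_restrictFirst_sub_le hf]
    rw [mean_eq_restrictFirst, sum_influence_eq_restrictFirst,
      show (1 - (mean g₀ + mean g₁) / 2) / 2 = ((1 - mean g₀) / 2 + (1 - mean g₁) / 2) / 2 by ring]
    linarith

lemma negMulLog_one_sub_mean_sq_le {n : ℕ} {f : (Fin n → Bool) → ℝ} (hf : IsBoolean f) :
    negMulLog (1 - mean f ^ 2) ≤ 2 * log 2 * ∑ i, influence i f := by
  wlog hm : 0 ≤ mean f generalizing f
  · simpa [mean_neg, influence_neg] using this hf.neg (by rw [mean_neg]; linarith)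
  have hm₁ := (abs_le.mp hf.abs_mean_le_one).2
  have hv := negMulLog_four_mul_mul_one_sub_le (t := (1 - mean f) / 2) (by linarith) (by linarith)
  rw [show 4 * ((1 - mean f) / 2) * (1 - (1 - mean f) / 2) = 1 - mean f ^ 2 by ring] at hv
  linarith [two_mul_negMulLog_le_log_two_mul_sum_influence hf]

theorem edge_iso_var {n : ℕ} (f : (Fin n → Bool) → ℝ) (hf : IsBoolean f) :
    (1 / 2) * fVar f * Real.logb 2 (1 / fVar f) ≤ totalInfluence f := by
  have hlog2 : 0 < log 2 := log_pos one_lt_two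
  have hlogb : ∀ v : ℝ, 1 / 2 * v * logb 2 (1 / v) = negMulLog v / (2 * log 2) := fun v => by
    rw [negMulLog, logb, one_div v, log_inv]
    field_simp
  rw [fVar, coeff_empty, totalInfluence_eq_sum_influence, hlogb, div_le_iff₀ (by positivity)]
  linarith [negMulLog_one_sub_mean_sq_le hf]
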